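/- With the notation of the double-zero identity: if the smooth functions B_{ab}(ξ_p,ξ_q,ξ_r,ξ_s) satisfy the generalised Darboux system Γ_{c;ab} := ∂_c B_{ab} − B_{ac}B_{cb} = 0 for all pairwise distinct a,b,c ∈ {p,q,r,s}, then the Lagrangian 3-form is closed: ∂_s 𝓛_{pqr} − ∂_p 𝓛_{qrs} + ∂_q 𝓛_{rsp} − ∂_r 𝓛_{spq} = 0. -/

import Mathlib

/-- Partial derivative in the `i`-th coordinate direction. -/
noncomputable def pd (i : Fin 4) (f : (Fin 4 → ℝ) → ℝ) (x : Fin 4 → ℝ) : ℝ :=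
  fderiv ℝ f x (Pi.single i 1)

/-- `Γ_{c;ab} = ∂_c B_{ab} − B_{ac} B_{cb}`. -/
noncomputable def Gam (B : Fin 4 → Fin 4 → (Fin 4 → ℝ) → ℝ)
    (c a b : Fin 4) (x : Fin 4 → ℝ) : ℝ :=
  pd c (B a b) x - B a c x * B c b x

/-- The Darboux Lagrangian density `𝓛_{pqr}`. -/
noncomputable def Lag (B : Fin 4 → Fin 4 → (Fin 4 → ℝ) → ℝ)
    (p q r : Fin 4) (x : Fin 4 → ℝ) : ℝ :=
  (1/2) * (B r q x * pd p (B q r) x - B q r x * pd p (B r q) x)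
  + (1/2) * (B q p x * pd r (B p q) x - B p q x * pd r (B q p) x)
  + (1/2) * (B p r x * pd q (B r p) x - B r p x * pd q (B p r) x)
  + B r p x * B p q x * B q r x - B r q x * B q p x * B p r x

lemma pd_mul (i : Fin 4) {f g : (Fin 4 → ℝ) → ℝ} {x : Fin 4 → ℝ}
    (hf : DifferentiableAt ℝ f x) (hg : DifferentiableAt ℝ g x) :
    pd i (fun y => f y * g y) x = pd i f x * g x + f x * pd i g x := by
  unfold pd
  rw [fderiv_fun_mul hf hg]
  simp
  ring

lemma pd_sub (i : Fin 4) {f g : (Fin 4 → ℝ) → ℝ} {x : Fin 4 → ℝ}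
    (hf : DifferentiableAt ℝ f x) (hg : DifferentiableAt ℝ g x) :
    pd i (fun y => f y - g y) x = pd i f x - pd i g x := by
  unfold pd
  rw [fderiv_fun_sub hf hg]
  simp

lemma pd_const_mul (i : Fin 4) (c : ℝ) {f : (Fin 4 → ℝ) → ℝ} {x : Fin 4 → ℝ}
    (hf : DifferentiableAt ℝ f x) :
    pd i (fun y => c * f y) x = c * pd i f x := by
  unfold pd
  rw [fderiv_const_mul hf]
  simp

lemma pd_triple (i : Fin 4) {f g h : (Fin 4 → ℝ) → ℝ} {x : Fin 4 → ℝ}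
    (hf : DifferentiableAt ℝ f x) (hg : DifferentiableAt ℝ g x)
    (hh : DifferentiableAt ℝ h x) :
    pd i (fun y => f y * g y * h y) x
      = pd i f x * g x * h x + f x * pd i g x * h x + f x * g x * pd i h x := by
  rw [pd_mul i (f := fun y => f y * g y) (hf.mul hg) hh, pd_mul i hf hg]
  ring

section Main

variable (B : Fin 4 → Fin 4 → (Fin 4 → ℝ) → ℝ)

lemma Lag_eq (hG : ∀ a b c, a ≠ b → a ≠ c → b ≠ c → ∀ x,
      pd c (B a b) x = B a c x * B c b x)
    (a b c : Fin 4) (hab : a ≠ b) (hac : a ≠ c) (hbc : b ≠ c) :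
    Lag B a b c = fun x =>
      (1/2) * (B a c x * B c b x * B b a x - B a b x * B b c x * B c a x) := by
  funext x
  unfold Lag
  rw [hG b c a hbc hab.symm hac.symm, hG c b a hbc.symm hac.symm hab.symm,
      hG a b c hab hac hbc, hG b a c hab.symm hbc hac,
      hG c a b hac.symm hbc.symm hab, hG a c b hac hab hbc.symm]
  ring

lemma pd_Lag (hd : ∀ u v, u ≠ v → Differentiable ℝ (B u v))
    (hG : ∀ a b c, a ≠ b → a ≠ c → b ≠ c → ∀ x,
      pd c (B a b) x = B a c x * B c b x)
    (a b c d : Fin 4) (hab : a ≠ b) (hac : a ≠ c) (had : a ≠ d)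
    (hbc : b ≠ c) (hbd : b ≠ d) (hcd : c ≠ d) (x : Fin 4 → ℝ) :
    pd d (Lag B a b c) x
      = (1/2) * ((B a d x * B d c x) * B c b x * B b a x
          + B a c x * (B c d x * B d b x) * B b a x
          + B a c x * B c b x * (B b d x * B d a x)
          - ((B a d x * B d b x) * B b c x * B c a x
            + B a b x * (B b d x * B d c x) * B c a x
            + B a b x * B b c x * (B c d x * B d a x))) := by
  rw [Lag_eq B hG a b c hab hac hbc]
  rw [pd_const_mul d _
      (f := fun y => B a c y * B c b y * B b a y - B a b y * B b c y * B c a y)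
      (((((hd a c hac x).mul (hd c b hbc.symm x)).mul (hd b a hab.symm x)).sub
        (((hd a b hab x).mul (hd b c hbc x)).mul (hd c a hac.symm x))))]
  rw [pd_sub d (f := fun y => B a c y * B c b y * B b a y)
      (g := fun y => B a b y * B b c y * B c a y)
      (((hd a c hac x).mul (hd c b hbc.symm x)).mul (hd b a hab.symm x))
      (((hd a b hab x).mul (hd b c hbc x)).mul (hd c a hac.symm x))]
  rw [pd_triple d (hd a c hac x) (hd c b hbc.symm x) (hd b a hab.symm x)]
  rw [pd_triple d (hd a b hab x) (hd b c hbc x) (hd c a hac.symm x)]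
  rw [hG a c d hac had hcd, hG c b d hbc.symm hcd hbd, hG b a d hab.symm hbd had,
      hG a b d hab had hbd, hG b c d hbc hbd hcd, hG c a d hac.symm hcd had]

end Main

/-- on solutions of the generalised Darboux system the Lagrangian
3-form is closed. -/
theorem darboux_lagrangian_closed_on_shell
    (B : Fin 4 → Fin 4 → (Fin 4 → ℝ) → ℝ)
    (hsmooth : ∀ a b, a ≠ b → ContDiff ℝ (⊤ : ℕ∞) (B a b))
    (hsys : ∀ a b c, a ≠ b → a ≠ c → b ≠ c → ∀ x, Gam B c a b x = 0)
    (p q r s : Fin 4)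
    (hpq : p ≠ q) (hpr : p ≠ r) (hps : p ≠ s)
    (hqr : q ≠ r) (hqs : q ≠ s) (hrs : r ≠ s) :
    ∀ x : Fin 4 → ℝ,
      pd s (Lag B p q r) x - pd p (Lag B q r s) x
        + pd q (Lag B r s p) x - pd r (Lag B s p q) x = 0 := by
  intro x
  have hd : ∀ u v, u ≠ v → Differentiable ℝ (B u v) :=
    fun u v h => fun y => ((hsmooth u v h).differentiable (by simp)).differentiableAt
  have hG : ∀ a b c, a ≠ b → a ≠ c → b ≠ c → ∀ x,
      pd c (B a b) x = B a c x * B c b x := by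
    intro a b c hab hac hbc y
    have := hsys a b c hab hac hbc y
    unfold Gam at this
    linarith
  rw [pd_Lag B hd hG p q r s hpq hpr hps hqr hqs hrs x,
      pd_Lag B hd hG q r s p hqr hqs hpq.symm hrs hpr.symm hps.symm x,
      pd_Lag B hd hG r s p q hrs hpr.symm hqr.symm hps.symm hqs.symm hpq x,
      pd_Lag B hd hG s p q r hps.symm hqs.symm hrs.symm hpq hpr hqr x]
  ring
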